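/- Let v ∈ N be a monomial matrix; for 1 ≤ i ≤ n write v(i) for the row index of the nonzero entry in column i of v and v_i for that nonzero entry. Then v ∈ N_μ if and only if for all 1 ≤ i < j ≤ n with v(i) < v(j) the following hold: (i) if i ∉ B_μ and v(i) ∈ B_μ, then j ≠ i+1; (ii) if i ∈ B_μ and v(i) ∉ B_μ, then v(j) ≠ v(i)+1; (iii) if i ∉ B_μ and v(i) ∉ B_μ, then j = i+1 if and only if v(j) = v(i)+1, and moreover if v(j) = v(i)+1 then v_i = v_j. -/

import Mathlib

open Matrix MonoidAlgebra

/-- `g` is upper triangular with all diagonal entries `1` (unipotent upper triangular). -/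
def IsUU {F : Type} [Field F] {n : ℕ} (g : Matrix (Fin n) (Fin n) F) : Prop :=
  (∀ i j : Fin n, j < i → g i j = 0) ∧ (∀ i : Fin n, g i i = 1)

instance {F : Type} [Field F] [DecidableEq F] {n : ℕ} (g : Matrix (Fin n) (Fin n) F) :
    Decidable (IsUU g) :=
  @decidable_of_iff _ ((∀ i j : Fin n, j < i → g i j = 0) ∧ (∀ i : Fin n, g i i = 1)) Iff.rfl
    (@instDecidableAnd _ _ (@Fintype.decidableForallFintype _ _
      (fun _ => @Fintype.decidableForallFintype _ _ (fun _ => inferInstance) _) _) inferInstance)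

/-- The set `B_μ = {μ₁, μ₁+μ₂, …, μ₁+⋯+μ_ℓ}` of partial sums of the composition `μ`. -/
def Bset (μ : List ℕ) : Finset ℕ :=
  (Finset.range μ.length).image fun k => (μ.take (k + 1)).sum

/-- The linear character `ψ_μ` of `U`, as a function on all of `GL n F`:
`ψ_μ(u) = ψ(Σ u_{i,i+1})`, where the sum runs over the superdiagonal positions whose
(1-based) row index `i` satisfies `i ∉ B_μ`. -/
noncomputable def psiMu {F : Type} [Field F] [Fintype F] [DecidableEq F]
    (ψ : AddChar F ℂ) (n : ℕ) (μ : List ℕ) (g : GL (Fin n) F) : ℂ :=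
  ψ (∑ p : Fin n × Fin n,
      if (p.1 : ℕ) + 1 = (p.2 : ℕ) ∧ (p.1 : ℕ) + 1 ∉ Bset μ
      then (g : Matrix (Fin n) (Fin n) F) p.1 p.2 else 0)

/-- The subgroup `U` of unipotent upper triangular matrices, as a finset of `GL n F`. -/
noncomputable def Uset (F : Type) [Field F] [Fintype F] [DecidableEq F] (n : ℕ) :
    Finset (GL (Fin n) F) :=
  Finset.univ.filter fun g => IsUU (g : Matrix (Fin n) (Fin n) F)

/-- The idempotent `e_μ = (1/|U|) Σ_{u ∈ U} ψ_μ(u⁻¹) u` of the group algebra `ℂ[GL n F]`. -/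
noncomputable def eMu {F : Type} [Field F] [Fintype F] [DecidableEq F]
    (ψ : AddChar F ℂ) (n : ℕ) (μ : List ℕ) : MonoidAlgebra ℂ (GL (Fin n) F) :=
  ((Uset F n).card : ℂ)⁻¹ • ∑ u ∈ Uset F n, MonoidAlgebra.single u (psiMu ψ n μ u⁻¹)

/-- A matrix is monomial when it has exactly one nonzero entry in each row and column. -/
def IsMonomialMat {F : Type} [Field F] {n : ℕ} (g : Matrix (Fin n) (Fin n) F) : Prop :=
  (∀ i : Fin n, ∃! j : Fin n, g i j ≠ 0) ∧ (∀ j : Fin n, ∃! i : Fin n, g i j ≠ 0)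

/-- The set `N_μ` of monomial matrices `v` such that whenever `u, vuv⁻¹ ∈ U` one has
`ψ_μ(u) = ψ_μ(vuv⁻¹)`. -/
noncomputable def Nmu {F : Type} [Field F] [Fintype F] [DecidableEq F]
    (ψ : AddChar F ℂ) (n : ℕ) (μ : List ℕ) : Set (GL (Fin n) F) :=
  {v | IsMonomialMat (v : Matrix (Fin n) (Fin n) F) ∧
    ∀ u : GL (Fin n) F, IsUU (u : Matrix (Fin n) (Fin n) F) →
      IsUU ((v * u * v⁻¹ : GL (Fin n) F) : Matrix (Fin n) (Fin n) F) →
      psiMu ψ n μ u = psiMu ψ n μ (v * u * v⁻¹)}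

/-- The set `M_μ` of `ℓ×ℓ` matrices of monic polynomials with nonzero constant term whose
degree row sums and degree column sums are both equal to `μ`. -/
def Mmu (F : Type) [Field F] (μ : List ℕ) :
    Set (Matrix (Fin μ.length) (Fin μ.length) (Polynomial F)) :=
  {a | (∀ i j, (a i j).Monic ∧ Polynomial.eval 0 (a i j) ≠ 0) ∧
       (∀ i, (∑ j, (a i j).natDegree) = μ.get i) ∧
       (∀ j, (∑ i, (a i j).natDegree) = μ.get j)}

/-- The unipotent Hecke algebra `H_μ = e_μ ℂ[G] e_μ` as a subspace of the group algebra. -/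
noncomputable def Hsub {F : Type} [Field F] [Fintype F] [DecidableEq F] {n : ℕ}
    (e : MonoidAlgebra ℂ (GL (Fin n) F)) : Submodule ℂ (MonoidAlgebra ℂ (GL (Fin n) F)) :=
  LinearMap.range ((LinearMap.mulLeft ℂ e).comp (LinearMap.mulRight ℂ e))

namespace NmuAux
set_option linter.unusedSectionVars false
variable {F : Type} [Field F] [Fintype F] [DecidableEq F] {n : ℕ}

noncomputable def elemGL (i j : Fin n) (h : i ≠ j) (t : F) : GL (Fin n) F :=
  ⟨1 + Matrix.single i j t, 1 + Matrix.single i j (-t), by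
    have h0 : Matrix.single i j t * Matrix.single i j (-t) = 0 :=
      Matrix.single_mul_single_of_ne (h := Ne.symm h) ..
    have h1 : Matrix.single i j t + Matrix.single i j (-t) = 0 := by
      rw [← Matrix.single_add]; simp
    calc (1 + Matrix.single i j t) * (1 + Matrix.single i j (-t))
        = 1 + (Matrix.single i j t + Matrix.single i j (-t))
          + Matrix.single i j t * Matrix.single i j (-t) := by noncomm_ring
      _ = 1 := by rw [h0, h1]; simp, by
    have h0 : Matrix.single i j (-t) * Matrix.single i j t = 0 :=
      Matrix.single_mul_single_of_ne (h := Ne.symm h) ..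
    have h1 : Matrix.single i j (-t) + Matrix.single i j t = 0 := by
      rw [← Matrix.single_add]; simp
    calc (1 + Matrix.single i j (-t)) * (1 + Matrix.single i j t)
        = 1 + (Matrix.single i j (-t) + Matrix.single i j t)
          + Matrix.single i j (-t) * Matrix.single i j t := by noncomm_ring
      _ = 1 := by rw [h0, h1]; simp⟩

lemma elemGL_val (i j : Fin n) (h : i ≠ j) (t : F) :
    (elemGL i j h t : Matrix (Fin n) (Fin n) F) = 1 + Matrix.single i j t := rfl

lemma isUU_one_add (i j : Fin n) (hij : i < j) (t : F) :
    IsUU (1 + Matrix.single i j t) := by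
  constructor
  · intro a b hba
    have h1 : a ≠ b := (ne_of_lt hba).symm
    have h2 : ¬ (i = a ∧ j = b) := by
      rintro ⟨rfl, rfl⟩; exact absurd hij (not_lt.mpr hba.le)
    simp [Matrix.add_apply, Matrix.one_apply_ne h1,
      Matrix.single_apply_of_ne (h := h2)]
  · intro a
    have h2 : ¬ (i = a ∧ j = a) := by rintro ⟨rfl, rfl⟩; exact absurd rfl hij.ne
    simp [Matrix.add_apply, Matrix.single_apply_of_ne (h := h2)]

lemma psiMu_one_add (ψ : AddChar F ℂ) (μ : List ℕ) (i j : Fin n) (h : i ≠ j) (t : F)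
    (g : GL (Fin n) F) (hg : (g : Matrix (Fin n) (Fin n) F) = 1 + Matrix.single i j t) :
    psiMu ψ n μ g
      = ψ (if (i : ℕ) + 1 = (j : ℕ) ∧ (i : ℕ) + 1 ∉ Bset μ then t else 0) := by
  unfold psiMu
  congr 1
  rw [hg, Fintype.sum_eq_single (i, j)]
  · by_cases hc : (i : ℕ) + 1 = (j : ℕ) ∧ (i : ℕ) + 1 ∉ Bset μ
    · simp [hc, Matrix.add_apply, Matrix.one_apply_ne h]
    · simp [hc]
  · intro p hp
    by_cases hc : (p.1 : ℕ) + 1 = (p.2 : ℕ) ∧ (p.1 : ℕ) + 1 ∉ Bset μ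
    · have h1 : p.1 ≠ p.2 := by
        intro e
        have := hc.1
        rw [e] at this
        omega
      have h2 : ¬ (i = p.1 ∧ j = p.2) := by
        rintro ⟨rfl, rfl⟩; exact hp rfl
      simp [hc, Matrix.add_apply, Matrix.one_apply_ne h1,
        Matrix.single_apply_of_ne (h := h2)]
    · simp [hc]

def vinvM (σ : Equiv.Perm (Fin n)) (c : Fin n → F) : Matrix (Fin n) (Fin n) F :=
  Matrix.of fun a b => if b = σ a then (c a)⁻¹ else 0

variable (σ : Equiv.Perm (Fin n)) (c : Fin n → F)

lemma vmul_vinv (v : GL (Fin n) F) (hc : ∀ j, c j ≠ 0)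
    (hv : ∀ i j : Fin n, (v : Matrix (Fin n) (Fin n) F) i j = if i = σ j then c j else 0) :
    (v : Matrix (Fin n) (Fin n) F) * vinvM σ c = 1 := by
  ext a b
  rw [Matrix.mul_apply, Finset.sum_eq_single (σ.symm a)]
  · rw [hv]
    simp [vinvM, Matrix.one_apply, hc (σ.symm a), eq_comm]
  · intro k _ hk
    rw [hv]
    have : a ≠ σ k := by
      intro e; exact hk (by rw [e]; simp)
    simp [this]
  · simp

lemma vinv_mul_v (v : GL (Fin n) F) (hc : ∀ j, c j ≠ 0)
    (hv : ∀ i j : Fin n, (v : Matrix (Fin n) (Fin n) F) i j = if i = σ j then c j else 0) :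
    vinvM σ c * (v : Matrix (Fin n) (Fin n) F) = 1 := by
  ext a b
  rw [Matrix.mul_apply, Finset.sum_eq_single (σ a)]
  · rw [hv]
    by_cases hab : a = b
    · subst hab; simp [vinvM, Matrix.one_apply, hc a]
    · have : σ a ≠ σ b := fun e => hab (σ.injective e)
      simp [vinvM, Matrix.one_apply, hab, this]
  · intro k _ hk
    simp [vinvM, hk]
  · simp

lemma vinv_val (v : GL (Fin n) F) (hc : ∀ j, c j ≠ 0)
    (hv : ∀ i j : Fin n, (v : Matrix (Fin n) (Fin n) F) i j = if i = σ j then c j else 0) :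
    ((v⁻¹ : GL (Fin n) F) : Matrix (Fin n) (Fin n) F) = vinvM σ c := by
  calc ((v⁻¹ : GL (Fin n) F) : Matrix (Fin n) (Fin n) F)
      = 1 * ((v⁻¹ : GL (Fin n) F) : Matrix (Fin n) (Fin n) F) := (one_mul _).symm
    _ = vinvM σ c * ((v : Matrix (Fin n) (Fin n) F) *
          ((v⁻¹ : GL (Fin n) F) : Matrix (Fin n) (Fin n) F)) := by
        rw [← vinv_mul_v σ c v hc hv, mul_assoc]
    _ = vinvM σ c := by
        have : (v : Matrix (Fin n) (Fin n) F) *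
            ((v⁻¹ : GL (Fin n) F) : Matrix (Fin n) (Fin n) F) = 1 := by
          rw [← Units.val_mul, mul_inv_cancel, Units.val_one]
        rw [this, mul_one]

lemma conj_val (v : GL (Fin n) F) (hc : ∀ j, c j ≠ 0)
    (hv : ∀ i j : Fin n, (v : Matrix (Fin n) (Fin n) F) i j = if i = σ j then c j else 0)
    (u : GL (Fin n) F) :
    ((v * u * v⁻¹ : GL (Fin n) F) : Matrix (Fin n) (Fin n) F)
      = (v : Matrix (Fin n) (Fin n) F) * (u : Matrix (Fin n) (Fin n) F) * vinvM σ c := by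
  rw [Units.val_mul, Units.val_mul, vinv_val σ c v hc hv]

lemma conj_entry (v : GL (Fin n) F)
    (hv : ∀ i j : Fin n, (v : Matrix (Fin n) (Fin n) F) i j = if i = σ j then c j else 0)
    (M : Matrix (Fin n) (Fin n) F) (a b : Fin n) :
    ((v : Matrix (Fin n) (Fin n) F) * M * vinvM σ c) (σ a) (σ b)
      = c a * M a b * (c b)⁻¹ := by
  rw [Matrix.mul_apply, Finset.sum_eq_single b]
  · rw [Matrix.mul_apply, Finset.sum_eq_single a]
    · rw [hv]; simp [vinvM]
    · intro k _ hk
      rw [hv]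
      have : σ a ≠ σ k := fun e => hk (σ.injective e).symm
      simp [this]
    · simp
  · intro k _ hk
    have : σ b ≠ σ k := fun e => hk (σ.injective e).symm
    simp [vinvM, this]
  · simp

lemma conj_elem (v : GL (Fin n) F)
    (hv : ∀ i j : Fin n, (v : Matrix (Fin n) (Fin n) F) i j = if i = σ j then c j else 0)
    (i j : Fin n) (t : F) :
    (v : Matrix (Fin n) (Fin n) F) * (1 + Matrix.single i j t) * vinvM σ c
      = (v : Matrix (Fin n) (Fin n) F) * vinvM σ c
        + Matrix.single (σ i) (σ j) (c i * t * (c j)⁻¹) := by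
  rw [mul_add, add_mul, mul_one]
  congr 1
  have h1 : (v : Matrix (Fin n) (Fin n) F) * Matrix.single i j t
      = Matrix.single (σ i) j (c i * t) := by
    ext a b
    by_cases hb : b = j
    · subst hb
      rw [Matrix.mul_single_apply_same, hv]
      by_cases ha : a = σ i
      · subst ha; simp
      · simp [ha, Ne.symm ha]
    · rw [Matrix.mul_single_apply_of_ne (hbj := hb),
        Matrix.single_apply_of_col_ne _ _ (Ne.symm hb)]
  rw [h1]
  ext a b
  by_cases ha : a = σ i
  · subst ha
    rw [Matrix.single_mul_apply_same]
    by_cases hb : b = σ j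
    · subst hb; simp [vinvM, mul_assoc]
    · simp [vinvM, Ne.symm hb, hb]
  · rw [Matrix.single_mul_apply_of_ne (h := ha),
      Matrix.single_apply_of_row_ne (Ne.symm ha)]

end NmuAux


/-- Combinatorial characterization of membership in `N_μ` for a monomial
matrix `v` with nonzero entries `v (σ j) j = c j` (so, in the paper's 1-based notation,
column `i` has its nonzero entry `v_i = c (i-1)` in row `v(i) = σ(i-1) + 1`). -/
theorem mem_Nmu_iff {F : Type} [Field F] [Fintype F] [DecidableEq F]
    (n : ℕ) (hn : 1 ≤ n) (ψ : AddChar F ℂ) (hψ : ψ ≠ 1)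
    (μ : List ℕ) (hpos : ∀ x ∈ μ, 0 < x) (hsum : μ.sum = n)
    (v : GL (Fin n) F) (σ : Equiv.Perm (Fin n)) (c : Fin n → F) (hc : ∀ j, c j ≠ 0)
    (hv : ∀ i j : Fin n, (v : Matrix (Fin n) (Fin n) F) i j = if i = σ j then c j else 0) :
    v ∈ Nmu ψ n μ ↔
      ∀ i j : Fin n, i < j → σ i < σ j →
        ((((i : ℕ) + 1 ∉ Bset μ ∧ ((σ i : ℕ) + 1) ∈ Bset μ) → (j : ℕ) ≠ (i : ℕ) + 1) ∧
         (((i : ℕ) + 1 ∈ Bset μ ∧ ((σ i : ℕ) + 1) ∉ Bset μ) → (σ j : ℕ) ≠ (σ i : ℕ) + 1) ∧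
         (((i : ℕ) + 1 ∉ Bset μ ∧ ((σ i : ℕ) + 1) ∉ Bset μ) →
            (((j : ℕ) = (i : ℕ) + 1 ↔ (σ j : ℕ) = (σ i : ℕ) + 1) ∧
             ((σ j : ℕ) = (σ i : ℕ) + 1 → c i = c j)))) := by
  have hnz : ∀ x : F, ψ x ≠ 0 := by
    intro x hx
    have h := AddChar.map_add_eq_mul ψ x (-x)
    rw [add_neg_cancel, AddChar.map_zero_eq_one, hx, zero_mul] at h
    exact one_ne_zero h
  constructor
  · rintro ⟨_, hN⟩ i j hij hσij
    have hijne : i ≠ j := hij.ne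
    have hσne : σ i ≠ σ j := hσij.ne
    have H : ∀ t : F,
        ψ (if (i : ℕ) + 1 = (j : ℕ) ∧ (i : ℕ) + 1 ∉ Bset μ then t else 0)
          = ψ (if (σ i : ℕ) + 1 = (σ j : ℕ) ∧ (σ i : ℕ) + 1 ∉ Bset μ
              then c i * t * (c j)⁻¹ else 0) := by
      intro t
      have hval : ((v * NmuAux.elemGL i j hijne t * v⁻¹ : GL (Fin n) F) :
          Matrix (Fin n) (Fin n) F)
          = 1 + Matrix.single (σ i) (σ j) (c i * t * (c j)⁻¹) := by
        rw [NmuAux.conj_val σ c v hc hv, NmuAux.elemGL_val,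
          NmuAux.conj_elem σ c v hv, NmuAux.vmul_vinv σ c v hc hv]
      have h1 := hN (NmuAux.elemGL i j hijne t)
        (by rw [NmuAux.elemGL_val]; exact NmuAux.isUU_one_add i j hij t)
        (by rw [hval]; exact NmuAux.isUU_one_add _ _ hσij _)
      rw [NmuAux.psiMu_one_add ψ μ i j hijne t _ (NmuAux.elemGL_val i j hijne t),
        NmuAux.psiMu_one_add ψ μ (σ i) (σ j) hσne _ _ hval] at h1
      exact h1
    obtain ⟨s, hs⟩ := AddChar.ne_one_iff.mp hψ
    have hP12 : ((i : ℕ) + 1 = (j : ℕ) ∧ (i : ℕ) + 1 ∉ Bset μ) →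
        ((σ i : ℕ) + 1 = (σ j : ℕ) ∧ (σ i : ℕ) + 1 ∉ Bset μ) := by
      intro hP1
      by_contra hP2
      have h2 := H s
      rw [if_pos hP1, if_neg hP2, AddChar.map_zero_eq_one] at h2
      exact hs h2
    have hP21 : ((σ i : ℕ) + 1 = (σ j : ℕ) ∧ (σ i : ℕ) + 1 ∉ Bset μ) →
        ((i : ℕ) + 1 = (j : ℕ) ∧ (i : ℕ) + 1 ∉ Bset μ) := by
      intro hP2
      by_contra hP1
      have h2 := H ((c i)⁻¹ * s * c j)
      rw [if_neg hP1, if_pos hP2, AddChar.map_zero_eq_one] at h2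
      have harg : c i * ((c i)⁻¹ * s * c j) * (c j)⁻¹ = s := by
        have he : c i * ((c i)⁻¹ * s * c j) * (c j)⁻¹
            = (c i * (c i)⁻¹) * s * (c j * (c j)⁻¹) := by ring
        rw [he, mul_inv_cancel₀ (hc i), mul_inv_cancel₀ (hc j), one_mul, mul_one]
      rw [harg] at h2
      exact hs h2.symm
    have hcc : ((i : ℕ) + 1 = (j : ℕ) ∧ (i : ℕ) + 1 ∉ Bset μ) →
        ((σ i : ℕ) + 1 = (σ j : ℕ) ∧ (σ i : ℕ) + 1 ∉ Bset μ) → c i = c j := by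
      intro hP1 hP2
      by_contra hne
      have hd : (1 : F) - c i * (c j)⁻¹ ≠ 0 := by
        intro e
        exact hne ((mul_inv_eq_one₀ (hc j)).mp (sub_eq_zero.mp e).symm)
      set t := ((1 : F) - c i * (c j)⁻¹)⁻¹ * s with ht
      have h2 := H t
      rw [if_pos hP1, if_pos hP2] at h2
      have h3 : ψ (t - c i * t * (c j)⁻¹) = 1 := by
        calc ψ (t - c i * t * (c j)⁻¹)
            = ψ t * ψ (-(c i * t * (c j)⁻¹)) := by
              rw [sub_eq_add_neg, AddChar.map_add_eq_mul]
          _ = ψ (c i * t * (c j)⁻¹) * (ψ (c i * t * (c j)⁻¹))⁻¹ := by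
              rw [h2, AddChar.map_neg_eq_inv]
          _ = 1 := mul_inv_cancel₀ (hnz _)
      have harg : t - c i * t * (c j)⁻¹ = s := by
        have h4 : t - c i * t * (c j)⁻¹ = t * (1 - c i * (c j)⁻¹) := by ring
        rw [h4, ht, mul_comm (((1 : F) - c i * (c j)⁻¹)⁻¹) s, mul_assoc,
          inv_mul_cancel₀ hd, mul_one]
      rw [harg] at h3
      exact hs h3
    refine ⟨?_, ?_, ?_⟩
    · rintro ⟨hiB, hσiB⟩ hj
      exact (hP12 ⟨hj.symm, hiB⟩).2 hσiB
    · rintro ⟨hiB, hσiB⟩ hσj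
      exact (hP21 ⟨hσj.symm, hσiB⟩).2 hiB
    · rintro ⟨hiB, hσiB⟩
      refine ⟨⟨fun hj => (hP12 ⟨hj.symm, hiB⟩).1.symm,
        fun hσj => (hP21 ⟨hσj.symm, hσiB⟩).1.symm⟩, fun hσj =>
        hcc (hP21 ⟨hσj.symm, hσiB⟩) ⟨hσj.symm, hσiB⟩⟩
  · intro hcond
    constructor
    · constructor
      · intro a
        refine ⟨σ.symm a, ?_, ?_⟩
        · show (v : Matrix (Fin n) (Fin n) F) a (σ.symm a) ≠ 0
          rw [hv]; simp [hc (σ.symm a)]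
        · intro y hy
          rw [hv] at hy
          by_contra hne
          apply hy
          rw [if_neg]
          intro e
          exact hne (by rw [e]; simp)
      · intro b
        refine ⟨σ b, ?_, ?_⟩
        · show (v : Matrix (Fin n) (Fin n) F) (σ b) b ≠ 0
          rw [hv]; simp [hc b]
        · intro y hy
          rw [hv] at hy
          by_contra hne
          exact hy (if_neg hne)
    · intro u hu hcu
      set M := (u : Matrix (Fin n) (Fin n) F) with hM
      have hconj := NmuAux.conj_val σ c v hc hv u
      have hupper2 : ∀ a b : Fin n, σ b < σ a → M a b = 0 := by
        intro a b hba
        have h0 := hcu.1 (σ a) (σ b) hba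
        rw [hconj, NmuAux.conj_entry σ c v hv] at h0
        rcases mul_eq_zero.mp h0 with h | h
        · rcases mul_eq_zero.mp h with h' | h'
          · exact absurd h' (hc a)
          · exact h'
        · exact absurd (inv_eq_zero.mp h) (hc b)
      unfold psiMu
      congr 1
      rw [hconj]
      apply Fintype.sum_equiv (Equiv.prodCongr σ σ)
      rintro ⟨a, b⟩
      simp only [Equiv.prodCongr_apply, Prod.map]
      rw [NmuAux.conj_entry σ c v hv M a b]
      by_cases hP1 : (a : ℕ) + 1 = (b : ℕ) ∧ (a : ℕ) + 1 ∉ Bset μ <;>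
        by_cases hP2 : (σ a : ℕ) + 1 = (σ b : ℕ) ∧ (σ a : ℕ) + 1 ∉ Bset μ
      · rw [if_pos hP1, if_pos hP2]
        have hab : a < b := by rw [Fin.lt_def]; omega
        have hσab : σ a < σ b := by rw [Fin.lt_def]; omega
        have ceq : c a = c b :=
          ((hcond a b hab hσab).2.2 ⟨hP1.2, hP2.2⟩).2 hP2.1.symm
        rw [ceq, mul_comm (c b) (M a b), mul_assoc, mul_inv_cancel₀ (hc b), mul_one]
      · rw [if_pos hP1, if_neg hP2]
        have hab : a < b := by rw [Fin.lt_def]; omega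
        rcases lt_trichotomy (σ a) (σ b) with hσ | hσ | hσ
        · exfalso
          have hconds := hcond a b hab hσ
          by_cases hσB : (σ a : ℕ) + 1 ∈ Bset μ
          · exact hconds.1 ⟨hP1.2, hσB⟩ hP1.1.symm
          · have h5 := (hconds.2.2 ⟨hP1.2, hσB⟩).1.mp hP1.1.symm
            exact hP2 ⟨h5.symm, hσB⟩
        · exact absurd (σ.injective hσ) hab.ne
        · exact hupper2 a b hσ
      · rw [if_neg hP1, if_pos hP2]
        have hM0 : M a b = 0 := by
          have hσab : σ a < σ b := by rw [Fin.lt_def]; omega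
          rcases lt_trichotomy a b with hab | hab | hab
          · exfalso
            have hconds := hcond a b hab hσab
            by_cases hB : (a : ℕ) + 1 ∈ Bset μ
            · exact hconds.2.1 ⟨hB, hP2.2⟩ hP2.1.symm
            · have h5 := (hconds.2.2 ⟨hB, hP2.2⟩).1.mpr hP2.1.symm
              exact hP1 ⟨h5.symm, hB⟩
          · exfalso; have h6 := hP2.1; rw [hab] at h6; omega
          · exact hu.1 a b hab
        rw [hM0, mul_zero, zero_mul]
      · rw [if_neg hP1, if_neg hP2]
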